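/- Let V be a positive definite p×p real matrix, let θ ∈ ℝᵖ have all entries positive, let δ > 0, and set c := −δ·V·θ, τ := θᵀ·c and κ := θᵀ·V·θ. Let α ∈ (0,1), let S : ℝᵖ → ℝ be Borel measurable, and let q ∈ ℝ satisfy N(0,V)({z : S(z) > q}) = α. Then Φ(z_α − τ/√κ) ≥ α and Φ(z_α − τ/√κ) ≥ N(0,V)({z : S(z + c) > q}). (Theorem 5: the smoothed-indicator test's asymptotic local power along the direction c = −δVθ is at least α and is not smaller than that of any test based on the statistic S.) -/

import Mathlib

/-!
Write `N(0, V)` as the image of the standard Gaussian `γ` on `ℝᵖ` under `V^{1/2}`. Since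
`c = V^{1/2} w` with `w = -δ V^{1/2} θ`, shifting by `c` under `N(0, V)` is shifting by `w`
under `γ`, and `|w| = δ √κ = -τ / √κ`. The shifted measure has density
`exp(⟪w, z⟫ - |w|² / 2)` with respect to `γ`, increasing in `⟪w, z⟫`, so by the Neyman–Pearson
lemma no set of `γ`-mass `α` gains more mass under the shift than the half-space
`{⟪w, z⟫ > -z_α |w|}`, whose shifted mass is `Φ(z_α + |w|)`.
-/

open MeasureTheory Filter Topology ProbabilityTheory Matrix

noncomputable section

/-- The standard normal density `φ(x) = exp(−x²/2)/√(2π)`. -/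
def normalPDF (x : ℝ) : ℝ := Real.exp (-(x ^ 2) / 2) / Real.sqrt (2 * Real.pi)

/-- The standard normal CDF `Φ`. -/
def stdNormalCDF (x : ℝ) : ℝ := ∫ t in Set.Iic x, normalPDF t

/-- The positive semidefinite square root of a positive semidefinite matrix (the former
`Matrix.PosSemidef.sqrt`). -/
def posSemidefSqrt {p : ℕ} {V : Matrix (Fin p) (Fin p) ℝ} (hV : V.PosSemidef) :
    Matrix (Fin p) (Fin p) ℝ :=
  hV.1.eigenvectorUnitary.1 * diagonal ((↑) ∘ (√·) ∘ hV.1.eigenvalues) *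
    (star hV.1.eigenvectorUnitary : Matrix (Fin p) (Fin p) ℝ)

/-- The Gaussian measure `N(c, V)` on `ℝᵖ`: the pushforward of the product of `p`
standard Gaussian measures under `z ↦ c + V^{1/2}·z`, where `V^{1/2}` is the positive
semidefinite square root of `V`. -/
def gaussianPi {p : ℕ} (c : Fin p → ℝ) {V : Matrix (Fin p) (Fin p) ℝ}
    (hV : V.PosSemidef) : Measure (Fin p → ℝ) :=
  Measure.map (fun z => c + (posSemidefSqrt hV).mulVec z)
    (Measure.pi fun _ : Fin p => gaussianReal 0 1)

open Set
open scoped ENNReal MatrixOrder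

lemma normalPDF_eq_gaussianPDFReal : normalPDF = gaussianPDFReal 0 1 := by
  ext x
  simp [normalPDF, gaussianPDFReal, div_eq_inv_mul]

lemma gaussianReal_Iic (x : ℝ) : gaussianReal 0 1 (Iic x) = ENNReal.ofReal (stdNormalCDF x) := by
  rw [gaussianReal_apply_eq_integral 0 one_ne_zero, stdNormalCDF, normalPDF_eq_gaussianPDFReal]

lemma stdNormalCDF_mono : Monotone stdNormalCDF := by
  intro a b hab
  rw [stdNormalCDF, stdNormalCDF, normalPDF_eq_gaussianPDFReal]
  exact setIntegral_mono_set (integrable_gaussianPDFReal 0 1).integrableOn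
    (.of_forall (gaussianPDFReal_nonneg 0 1)) (Iic_subset_Iic.2 hab).eventuallyLE

lemma gaussianReal_Ioi (x : ℝ) : gaussianReal 0 1 (Ioi x) = ENNReal.ofReal (stdNormalCDF (-x)) := by
  have := nullSingletonClass_gaussianReal (μ := 0) one_ne_zero
  conv_lhs => rw [← neg_zero, ← gaussianReal_map_neg]
  have hpre : (fun y : ℝ => -y) ⁻¹' Ioi x = Iio (-x) := by
    ext
    simp
  rw [Measure.map_apply measurable_neg measurableSet_Ioi, hpre, measure_congr Iio_ae_eq_Iic,
    gaussianReal_Iic]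

lemma gaussianReal_sq_Ioi {σ : ℝ} (hσ : 0 < σ) (t : ℝ) :
    gaussianReal 0 (σ ^ 2).toNNReal (Ioi t) = ENNReal.ofReal (stdNormalCDF (-(t / σ))) := by
  have hmap : (gaussianReal 0 1).map (σ * ·) = gaussianReal 0 (σ ^ 2).toNNReal := by
    rw [gaussianReal_map_const_mul, mul_zero, mul_one]
    congr
    exact (max_eq_left (sq_nonneg σ)).symm
  have hpre : (σ * ·) ⁻¹' Ioi t = Ioi (t / σ) := by
    ext x
    simp [div_lt_iff₀' hσ]
  rw [← hmap, Measure.map_apply (measurable_const_mul σ) measurableSet_Ioi, hpre, gaussianReal_Ioi]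

/-- The Neyman–Pearson lemma: `L` is the likelihood ratio and `H` a superlevel set of it. -/
theorem setLIntegral_le_setLIntegral_of_threshold {α : Type*} [MeasurableSpace α]
    {μ : Measure α} [IsFiniteMeasure μ] {L : α → ℝ≥0∞} {B H : Set α} {ℓ : ℝ≥0∞}
    (hB : MeasurableSet B) (hH : MeasurableSet H) (hBH : μ B ≤ μ H)
    (hL_in : ∀ x ∈ H, ℓ ≤ L x) (hL_out : ∀ x ∉ H, L x ≤ ℓ) :
    ∫⁻ x in B, L x ∂μ ≤ ∫⁻ x in H, L x ∂μ := by
  have hdiff : μ (B \ H) ≤ μ (H \ B) := by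
    rw [← measure_inter_add_sdiff B hH, ← measure_inter_add_sdiff H hB, inter_comm] at hBH
    exact (ENNReal.add_le_add_iff_left (measure_ne_top μ _)).1 hBH
  calc ∫⁻ x in B, L x ∂μ = ∫⁻ x in B ∩ H, L x ∂μ + ∫⁻ x in B \ H, L x ∂μ :=
        (lintegral_inter_add_sdiff L B hH).symm
    _ ≤ ∫⁻ x in B ∩ H, L x ∂μ + ∫⁻ _ in B \ H, ℓ ∂μ :=
        add_le_add le_rfl (setLIntegral_mono' (hB.diff hH) fun x hx => hL_out x hx.2)
    _ ≤ ∫⁻ x in B ∩ H, L x ∂μ + ∫⁻ _ in H \ B, ℓ ∂μ := by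
        rw [setLIntegral_const, setLIntegral_const]
        gcongr
    _ ≤ ∫⁻ x in H ∩ B, L x ∂μ + ∫⁻ x in H \ B, L x ∂μ := by
        rw [inter_comm]
        exact add_le_add le_rfl (setLIntegral_mono' (hH.diff hB) fun x hx => hL_in x hx.1)
    _ = ∫⁻ x in H, L x ∂μ := lintegral_inter_add_sdiff L H hB

lemma lintegral_pi_prod {ι : Type*} [Fintype ι] {X : ι → Type*} [∀ i, MeasurableSpace (X i)]
    (μ : ∀ i, Measure (X i)) [∀ i, IsProbabilityMeasure (μ i)] {f : ∀ i, X i → ℝ≥0∞}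
    (hf : ∀ i, Measurable (f i)) :
    ∫⁻ x, ∏ i, f i (x i) ∂Measure.pi μ = ∏ i, ∫⁻ y, f i y ∂μ i := by
  rw [lintegral_prod_eq_prod_lintegral_of_indepFun _ _
    (iIndepFun_pi (X := f) fun i => (hf i).aemeasurable)
    fun i => (hf i).comp (measurable_pi_apply i)]
  exact Finset.prod_congr rfl fun i _ => (measurePreserving_eval μ i).lintegral_comp (hf i)

lemma pi_withDensity {ι : Type*} [Fintype ι] {X : ι → Type*} [∀ i, MeasurableSpace (X i)]
    (μ : ∀ i, Measure (X i)) [∀ i, IsProbabilityMeasure (μ i)] {f : ∀ i, X i → ℝ≥0∞}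
    (hf : ∀ i, Measurable (f i)) [∀ i, SigmaFinite ((μ i).withDensity (f i))] :
    Measure.pi (fun i => (μ i).withDensity (f i)) =
      (Measure.pi μ).withDensity fun x => ∏ i, f i (x i) := by
  refine Measure.pi_eq fun s hs => ?_
  rw [withDensity_apply _ (.univ_pi hs), ← lintegral_indicator (.univ_pi hs)]
  have hind : (univ.pi s).indicator (fun x => ∏ i, f i (x i)) =
      fun x => ∏ i, (s i).indicator (f i) (x i) := by
    ext x
    classical
    simp only [indicator_apply, Finset.prod_ite_zero, mem_univ_pi, Finset.mem_univ, true_imp_iff]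
  rw [hind, lintegral_pi_prod μ fun i => (hf i).indicator (hs i)]
  exact Finset.prod_congr rfl fun i _ => by
    rw [lintegral_indicator (hs i), withDensity_apply _ (hs i)]

abbrev stdGaussianPi (ι : Type*) [Fintype ι] : Measure (ι → ℝ) :=
  Measure.pi fun _ : ι => gaussianReal 0 1

section stdGaussianPi

variable {ι : Type*} [Fintype ι]

lemma dotProduct_self_nonneg (w : ι → ℝ) : 0 ≤ w ⬝ᵥ w := by
  simpa using dotProduct_self_star_nonneg w

lemma dotProduct_self_pos {w : ι → ℝ} (hw : w ≠ 0) : 0 < w ⬝ᵥ w := by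
  simpa using dotProduct_self_star_pos_iff.2 hw

lemma gaussianReal_eq_withDensity_exp (m : ℝ) :
    gaussianReal m 1 =
      (gaussianReal 0 1).withDensity fun x => ENNReal.ofReal (Real.exp (m * x - m ^ 2 / 2)) := by
  rw [gaussianReal_of_var_ne_zero m one_ne_zero, gaussianReal_of_var_ne_zero 0 one_ne_zero,
    ← withDensity_mul _ (measurable_gaussianPDF 0 1) (by fun_prop)]
  congr 1
  ext x
  rw [Pi.mul_apply, gaussianPDF, gaussianPDF, ← ENNReal.ofReal_mul (gaussianPDFReal_nonneg 0 1 x)]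
  simp only [gaussianPDFReal, NNReal.coe_one, mul_one, sub_zero, mul_assoc, ← Real.exp_add]
  ring_nf

lemma map_add_const_stdGaussianPi (w : ι → ℝ) :
    (stdGaussianPi ι).map (· + w) =
      (stdGaussianPi ι).withDensity fun z => ENNReal.ofReal (Real.exp (w ⬝ᵥ z - w ⬝ᵥ w / 2)) := by
  have hshift : (stdGaussianPi ι).map (· + w) = Measure.pi fun i => gaussianReal (w i) 1 := by
    rw [show (· + w) = fun (z : ι → ℝ) i => z i + w i from rfl,
      Measure.pi_map_pi fun i => (measurable_add_const (w i)).aemeasurable]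
    simp_rw [gaussianReal_map_add_const, zero_add]
  have : ∀ i, SigmaFinite ((gaussianReal 0 1).withDensity
      fun x => ENNReal.ofReal (Real.exp (w i * x - w i ^ 2 / 2))) := fun i => by
    rw [← gaussianReal_eq_withDensity_exp]
    infer_instance
  rw [hshift, funext fun i => gaussianReal_eq_withDensity_exp (w i),
    pi_withDensity _ fun i => by fun_prop]
  congr 1
  ext z
  rw [← ENNReal.ofReal_prod_of_nonneg fun i _ => (Real.exp_pos _).le, ← Real.exp_sum,
    Finset.sum_sub_distrib, ← Finset.sum_div]
  simp only [dotProduct, sq]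

lemma map_dotProduct_stdGaussianPi (w : ι → ℝ) :
    (stdGaussianPi ι).map (w ⬝ᵥ ·) = gaussianReal 0 (w ⬝ᵥ w).toNNReal := by
  set L : StrongDual ℝ (EuclideanSpace ℝ ι) := innerSL ℝ (WithLp.toLp 2 w)
  have hL : (w ⬝ᵥ ·) = L ∘ WithLp.toLp 2 := by
    ext z
    simp [L, EuclideanSpace.inner_toLp_toLp, dotProduct_comm]
  rw [hL, ← Measure.map_map L.continuous.measurable (by fun_prop), map_pi_eq_stdGaussian,
    IsGaussian.map_eq_gaussianReal, integral_strongDual_stdGaussian, variance_dual_stdGaussian,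
    innerSL_apply_norm, ← real_inner_self_eq_norm_sq, EuclideanSpace.inner_toLp_toLp]
  rfl

lemma stdGaussianPi_lt_dotProduct {w : ι → ℝ} (hw : w ≠ 0) (t : ℝ) :
    stdGaussianPi ι {z | t < w ⬝ᵥ z} =
      ENNReal.ofReal (stdNormalCDF (-(t / √(w ⬝ᵥ w)))) := by
  have hσ : 0 < √(w ⬝ᵥ w) := Real.sqrt_pos.2 (dotProduct_self_pos hw)
  rw [show {z | t < w ⬝ᵥ z} = (w ⬝ᵥ ·) ⁻¹' Ioi t from rfl,
    ← Measure.map_apply (by fun_prop) measurableSet_Ioi, map_dotProduct_stdGaussianPi]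
  simpa only [Real.sq_sqrt (dotProduct_self_nonneg w)] using gaussianReal_sq_Ioi hσ t

theorem stdGaussianPi_preimage_add_const_le (w : ι → ℝ) {B : Set (ι → ℝ)} (hB : MeasurableSet B)
    {z : ℝ} (hBz : stdGaussianPi ι B = ENNReal.ofReal (stdNormalCDF z)) :
    stdGaussianPi ι ((· + w) ⁻¹' B) ≤ ENNReal.ofReal (stdNormalCDF (z + √(w ⬝ᵥ w))) := by
  rcases eq_or_ne w 0 with rfl | hw
  · simp [hBz]
  set σ := √(w ⬝ᵥ w) with hσdef
  have hσ : 0 < σ := Real.sqrt_pos.2 (dotProduct_self_pos hw)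
  have hww : w ⬝ᵥ w = σ ^ 2 := (Real.sq_sqrt (dotProduct_self_nonneg w)).symm
  set L : (ι → ℝ) → ℝ≥0∞ := fun x => ENNReal.ofReal (Real.exp (w ⬝ᵥ x - w ⬝ᵥ w / 2))
  have hshift : ∀ A, MeasurableSet A →
      stdGaussianPi ι ((· + w) ⁻¹' A) = ∫⁻ x in A, L x ∂stdGaussianPi ι := fun A hA => by
    rw [← Measure.map_apply (measurable_add_const w) hA, map_add_const_stdGaussianPi,
      withDensity_apply _ hA]
  set H := {x | -(z * σ) < w ⬝ᵥ x}
  have hHmeas : MeasurableSet H := measurableSet_lt measurable_const (by fun_prop)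
  have hH : stdGaussianPi ι H = ENNReal.ofReal (stdNormalCDF z) := by
    rw [stdGaussianPi_lt_dotProduct hw, neg_div, neg_neg, mul_div_cancel_right₀ z hσ.ne']
  have hpreH : (· + w) ⁻¹' H = {x | -(z * σ) - σ ^ 2 < w ⬝ᵥ x} := by
    ext x
    simp only [H, mem_preimage, mem_ofPred_eq, dotProduct_add, hww]
    constructor <;> intro h <;> linarith
  calc stdGaussianPi ι ((· + w) ⁻¹' B) = ∫⁻ x in B, L x ∂stdGaussianPi ι := hshift B hB
    _ ≤ ∫⁻ x in H, L x ∂stdGaussianPi ι := by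
        refine setLIntegral_le_setLIntegral_of_threshold hB hHmeas (hBz.trans hH.symm).le
          (ℓ := ENNReal.ofReal (Real.exp (-(z * σ) - w ⬝ᵥ w / 2))) (fun x hx => ?_)
          (fun x hx => ?_)
        all_goals
          refine ENNReal.ofReal_le_ofReal (Real.exp_le_exp.2 ?_)
          simp only [H, mem_ofPred_eq, not_lt] at hx
          linarith
    _ = stdGaussianPi ι ((· + w) ⁻¹' H) := (hshift H hHmeas).symm
    _ = ENNReal.ofReal (stdNormalCDF (z + σ)) := by
        rw [hpreH, stdGaussianPi_lt_dotProduct hw, ← hσdef]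
        congr 2
        field_simp
        ring

end stdGaussianPi

section posSemidefSqrt

variable {p : ℕ} {V : Matrix (Fin p) (Fin p) ℝ}

lemma posSemidefSqrt_eq_sqrt (hV : V.PosSemidef) : posSemidefSqrt hV = CFC.sqrt V := by
  rw [CFC.sqrt_eq_real_sqrt V (nonneg_iff_posSemidef.2 hV), cfcₙ_eq_cfc, hV.1.cfc_eq]
  rfl

lemma posSemidefSqrt_mul_self (hV : V.PosSemidef) : posSemidefSqrt hV * posSemidefSqrt hV = V := by
  rw [posSemidefSqrt_eq_sqrt, CFC.sqrt_mul_sqrt_self V (nonneg_iff_posSemidef.2 hV)]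

lemma transpose_posSemidefSqrt (hV : V.PosSemidef) : (posSemidefSqrt hV)ᵀ = posSemidefSqrt hV := by
  rw [posSemidefSqrt_eq_sqrt]
  exact (CFC.sqrt_nonneg V).isSelfAdjoint

lemma posSemidefSqrt_mulVec_dotProduct_self (hV : V.PosSemidef) (x : Fin p → ℝ) :
    posSemidefSqrt hV *ᵥ x ⬝ᵥ posSemidefSqrt hV *ᵥ x = x ⬝ᵥ V *ᵥ x := by
  rw [dotProduct_mulVec, ← mulVec_transpose, transpose_posSemidefSqrt, mulVec_mulVec,
    posSemidefSqrt_mul_self, dotProduct_comm]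

lemma gaussianPi_apply (c : Fin p → ℝ) (hV : V.PosSemidef) {s : Set (Fin p → ℝ)}
    (hs : MeasurableSet s) :
    gaussianPi c hV s = stdGaussianPi (Fin p) ((fun z => c + posSemidefSqrt hV *ᵥ z) ⁻¹' s) :=
  Measure.map_apply (by fun_prop) hs

end posSemidefSqrt

theorem Q_locally_most_powerful_general
    {p : ℕ} (V : Matrix (Fin p) (Fin p) ℝ) (hV : V.PosDef)
    (θ : Fin p → ℝ) (δ : ℝ) (hδ : 0 < δ)
    (c : Fin p → ℝ) (hc : c = -(δ • V.mulVec θ))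
    (τ : ℝ) (hτ : τ = θ ⬝ᵥ c) (κ : ℝ) (hκ : κ = θ ⬝ᵥ V.mulVec θ)
    (α : ℝ)
    (S : (Fin p → ℝ) → ℝ) (hS : Measurable S)
    (q : ℝ) (hq : gaussianPi 0 hV.posSemidef {z | q < S z} = ENNReal.ofReal α)
    (zα : ℝ) (hzα : stdNormalCDF zα = α) :
    α ≤ stdNormalCDF (zα - τ / Real.sqrt κ) ∧
      gaussianPi 0 hV.posSemidef {z | q < S (z + c)} ≤
        ENNReal.ofReal (stdNormalCDF (zα - τ / Real.sqrt κ)) := by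
  rw [gaussianPi_apply _ _ (measurableSet_lt measurable_const hS), ← hzα] at hq
  rw [gaussianPi_apply _ _ (measurableSet_lt measurable_const (by fun_prop))]
  simp only [zero_add] at hq ⊢
  set Vs := posSemidefSqrt hV.posSemidef
  set w := -(δ • Vs *ᵥ θ)
  have hVsw : Vs *ᵥ w = c := by
    rw [hc, mulVec_neg, mulVec_smul, mulVec_mulVec, posSemidefSqrt_mul_self]
  have hshift : zα - τ / √κ = zα + √(w ⬝ᵥ w) := by
    have hww : w ⬝ᵥ w = δ ^ 2 * κ := by
      rw [neg_dotProduct_neg, smul_dotProduct, dotProduct_smul,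
        posSemidefSqrt_mulVec_dotProduct_self, hκ, smul_eq_mul, smul_eq_mul]
      ring
    rw [hww, Real.sqrt_mul (sq_nonneg δ), Real.sqrt_sq hδ.le, hτ, hc, dotProduct_neg,
      dotProduct_smul, smul_eq_mul, ← hκ, neg_div, sub_neg_eq_add, mul_div_assoc, Real.div_sqrt]
  have hpre : (Vs *ᵥ ·) ⁻¹' {z | q < S (z + c)} =
      (· + w) ⁻¹' ((Vs *ᵥ ·) ⁻¹' {z | q < S z}) := by
    ext z
    simp [mulVec_add, hVsw]
  rw [hshift, hpre]
  exact ⟨hzα ▸ stdNormalCDF_mono (le_add_of_nonneg_right (Real.sqrt_nonneg _)),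
    stdGaussianPi_preimage_add_const_le w
      ((measurableSet_lt measurable_const hS).preimage (by fun_prop)) hq⟩

/-- Theorem 5: along the local direction `c = −δ·V·θ`, the asymptotic local power
`Φ(z_α − τ/√κ)` of the smoothed-indicator test is at least `α` and is not smaller than
the local power `N(0,V)({z : S(z + c) > q})` of any level-`α` test based on `S`. -/
theorem Q_locally_most_powerful
    {p : ℕ} (V : Matrix (Fin p) (Fin p) ℝ) (hV : V.PosDef)
    (θ : Fin p → ℝ) (hθpos : ∀ j, 0 < θ j) (δ : ℝ) (hδ : 0 < δ)
    (c : Fin p → ℝ) (hc : c = -(δ • V.mulVec θ))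
    (τ : ℝ) (hτ : τ = θ ⬝ᵥ c) (κ : ℝ) (hκ : κ = θ ⬝ᵥ V.mulVec θ)
    (α : ℝ) (hα0 : 0 < α) (hα1 : α < 1)
    (S : (Fin p → ℝ) → ℝ) (hS : Measurable S)
    (q : ℝ) (hq : gaussianPi 0 hV.posSemidef {z | q < S z} = ENNReal.ofReal α)
    (zα : ℝ) (hzα : stdNormalCDF zα = α) :
    α ≤ stdNormalCDF (zα - τ / Real.sqrt κ) ∧
      gaussianPi 0 hV.posSemidef {z | q < S (z + c)} ≤
        ENNReal.ofReal (stdNormalCDF (zα - τ / Real.sqrt κ)) :=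
  Q_locally_most_powerful_general V hV θ δ hδ c hc τ hτ κ hκ α S hS q hq zα hzα
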